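/- Let ℓ be a prime number and let G be a profinite group equipped with a continuous surjective group homomorphism t : G → ℤ_ℓ (onto the additive group of ℓ-adic integers) whose kernel P is a pro-(prime-to-ℓ) profinite group. Let d, n ≥ 1 and let ρ : G → GL_d(ℤ/ℓ^nℤ) be a group homomorphism (no continuity assumption) such that ρ(g) is unipotent for every g ∈ G. Then ρ(P) = {1} and ρ is continuous (equivalently, the kernel of ρ is an open subgroup of G), where GL_d(ℤ/ℓ^nℤ) carries the discrete topology. -/

import Mathlib

/-!
Unipotent elements of `GL_d(ℤ/ℓ^n)` have `ℓ`-power order, so some `m = ℓ^K` kills the whole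
image of `ρ`. In the pro-prime-to-`ℓ` kernel `P` of `t` every element is an `m`-th power (true in
each finite quotient, then by compactness), so `ρ(P) = 1`. Hence `ρ` factors through `t`, and
since `t` is surjective, `ρ` kills `t⁻¹(ℓ^K ℤ_ℓ)`, an open subgroup.
-/

open Polynomial Topology

theorem one_add_pow_prime_pow_eq_one {R : Type*} [Ring R] {p n j : ℕ} (hp : p.Prime)
    (hpn : (p : R) ^ n = 0) {N : R} (hN : N ^ p ^ j = 0) : (1 + N) ^ p ^ (j + n) = 1 := by
  -- Frobenius gives the congruence mod `p`; raising to the `p^n`-th power lifts it mod `p^(n+1)`.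
  have hfrob : (p : ℤ[X]) ∣ (1 + X) ^ p ^ j - (1 + X ^ p ^ j) := by
    obtain ⟨r, hr⟩ := exists_add_pow_prime_pow_eq hp (1 : ℤ[X]) X j
    exact ⟨X * r, by rw [hr, one_pow]; ring⟩
  obtain ⟨q, hq⟩ := dvd_sub_pow_of_dvd_sub hfrob n
  have := congrArg (aeval N) hq
  simp only [map_sub, map_pow, map_add, map_one, map_mul, map_natCast, aeval_X, hN, add_zero,
    one_pow, pow_succ, hpn, zero_mul, sub_eq_zero, ← pow_mul, ← pow_add] at this
  exact this

theorem Units.exists_pow_prime_pow_eq_one_of_isNilpotent_sub_one {R : Type*} [Ring R]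
    {p n : ℕ} (hp : p.Prime) (hpn : (p : R) ^ n = 0) {u : Rˣ} (hu : IsNilpotent ((u : R) - 1)) :
    ∃ k, u ^ p ^ k = 1 := by
  obtain ⟨i, hi⟩ := hu
  have hN : ((u : R) - 1) ^ p ^ i = 0 := pow_eq_zero_of_le (Nat.lt_pow_self hp.one_lt).le hi
  refine ⟨i + n, Units.ext ?_⟩
  simpa using one_add_pow_prime_pow_eq_one hp hpn hN

theorem pow_prime_pow_card_eq_one {H : Type*} [Group H] [Finite H] {p : ℕ} (hp : p.Prime)
    {x : H} (hx : ∃ k, x ^ p ^ k = 1) : x ^ p ^ Nat.card H = 1 := by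
  obtain ⟨k, hk⟩ := hx
  obtain ⟨i, -, hi⟩ := (Nat.dvd_prime_pow hp).mp (orderOf_dvd_of_pow_eq_one hk)
  have hi_le : p ^ i ≤ Nat.card H := hi ▸ Nat.le_of_dvd Nat.card_pos (orderOf_dvd_natCard x)
  exact orderOf_dvd_iff_pow_eq_one.mp
    (hi ▸ pow_dvd_pow p ((Nat.lt_pow_self hp.one_lt).le.trans hi_le))

section Profinite

variable {H : Type*} [Group H] [TopologicalSpace H] [IsTopologicalGroup H]
  [CompactSpace H] [T2Space H] [TotallyDisconnectedSpace H]

theorem eq_one_of_forall_mem_openNormalSubgroup {x : H}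
    (hx : ∀ U : OpenNormalSubgroup H, x ∈ U) : x = 1 := by
  by_contra hne
  obtain ⟨W, hW, h1W, hxW⟩ := exists_isClopen_of_totally_separated (Ne.symm hne)
  obtain ⟨U, hU⟩ := IsTopologicalGroup.exist_openNormalSubgroup_sub_clopen_nhds_of_one hW h1W
  exact hxW (hU (hx U))

theorem exists_pow_eq_of_coprime_index {m : ℕ}
    (hcop : ∀ U : Subgroup H, U.Normal → IsOpen (U : Set H) → Nat.Coprime U.index m)
    (g : H) : ∃ h : H, h ^ m = g := by
  let C : OpenNormalSubgroup H → Set H := fun U => {h | (h ^ m)⁻¹ * g ∈ U}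
  have hC_closed (U : OpenNormalSubgroup H) : IsClosed (C U) :=
    U.toOpenSubgroup.isClosed.preimage ((continuous_pow m).inv.mul continuous_const)
  -- In the finite quotient `H ⧸ U`, of order prime to `m`, the `m`-th power map is bijective.
  have hC_nonempty (U : OpenNormalSubgroup H) : (C U).Nonempty := by
    have : Finite (H ⧸ U.toSubgroup) := U.toSubgroup.quotient_finite_of_isOpen U.isOpen'
    obtain ⟨x, hx⟩ := (powCoprime (hcop U.toSubgroup inferInstance U.isOpen')).surjective
      (g : H ⧸ U.toSubgroup)
    obtain ⟨h, rfl⟩ := QuotientGroup.mk_surjective x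
    exact ⟨h, QuotientGroup.eq.mp (by simpa [powCoprime] using hx)⟩
  have : Nonempty (OpenNormalSubgroup H) :=
    ⟨⟨⊤, (inferInstance : (⊤ : Subgroup H).Normal)⟩⟩
  obtain ⟨h, hh⟩ := IsCompact.nonempty_iInter_of_directed_nonempty_isCompact_isClosed C
    (fun U V => ⟨U ⊓ V, fun _ hx => hx.1, fun _ hx => hx.2⟩) hC_nonempty
    (fun U => (hC_closed U).isCompact) hC_closed
  exact ⟨h, inv_mul_eq_one.mp
    (eq_one_of_forall_mem_openNormalSubgroup fun U => Set.mem_iInter.mp hh U)⟩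

end Profinite

theorem PadicInt.isOpen_span_pow (p : ℕ) [Fact p.Prime] (K : ℕ) :
    IsOpen (Ideal.span {(p : ℤ_[p]) ^ K} : Set ℤ_[p]) := by
  have : (Ideal.span {(p : ℤ_[p]) ^ K} : Set ℤ_[p]) =
      Metric.closedBall 0 ((p : ℝ) ^ (-(K : ℤ))) := by
    ext x
    rw [Metric.mem_closedBall, dist_zero_right, PadicInt.norm_le_pow_iff_mem_span_pow,
      SetLike.mem_coe]
  rw [this]
  exact IsUltrametricDist.isOpen_closedBall 0
    (zpow_pos (by exact_mod_cast (Fact.out : p.Prime).pos) _).ne'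

theorem MonoidHom.map_eq_one_of_map_eq_map_pow {G A H : Type*} [Group G] [Monoid A] [Group H]
    {t : G →* A} {ρ : G →* H} (hker : t.ker ≤ ρ.ker) {m : ℕ} (hm : ∀ g, ρ g ^ m = 1)
    {g x : G} (hgx : t g = t x ^ m) : ρ g = 1 := by
  rw [← map_pow, MonoidHom.eq_iff] at hgx
  rw [← hm x, ← map_pow, MonoidHom.eq_iff]
  exact hker hgx

theorem isOpen_ker_of_ker_le_of_pow_eq_one {G H : Type*} [Group G] [TopologicalSpace G]
    [IsTopologicalGroup G] [Group H] {p : ℕ} [Fact p.Prime] {t : G →* Multiplicative ℤ_[p]}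
    (ht : Continuous t) (hts : Function.Surjective t) {ρ : G →* H} (hker : t.ker ≤ ρ.ker)
    {K : ℕ} (hK : ∀ g, ρ g ^ p ^ K = 1) : IsOpen (ρ.ker : Set G) := by
  have hV : t ⁻¹' (Multiplicative.toAdd ⁻¹' Ideal.span {(p : ℤ_[p]) ^ K}) ∈ 𝓝 1 :=
    ((PadicInt.isOpen_span_pow p K).preimage (continuous_toAdd.comp ht)).mem_nhds (by simp)
  refine Subgroup.isOpen_of_mem_nhds _ (Filter.mem_of_superset hV fun g hg => ?_)
  obtain ⟨z, hz⟩ := Ideal.mem_span_singleton'.mp hg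
  obtain ⟨x, hx⟩ := hts (Multiplicative.ofAdd z)
  refine MonoidHom.map_eq_one_of_map_eq_map_pow hker hK (x := x) ?_
  rw [hx, ← ofAdd_nsmul, nsmul_eq_mul, Nat.cast_pow, mul_comm, hz, ofAdd_toAdd]

theorem stmt_4_general
    (ℓ : ℕ) [Fact ℓ.Prime]
    (G : Type*) [Group G] [TopologicalSpace G] [IsTopologicalGroup G]
    [CompactSpace G] [T2Space G] [TotallyDisconnectedSpace G]
    (t : G →* Multiplicative ℤ_[ℓ])
    (ht : Continuous t) (hts : Function.Surjective t)
    (hP : ∀ U : Subgroup t.ker, U.Normal → IsOpen (U : Set t.ker) → Nat.Coprime U.index ℓ)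
    (d n : ℕ)
    (ρ : G →* Matrix.GeneralLinearGroup (Fin d) (ZMod (ℓ ^ n)))
    (hρ : ∀ g : G,
      IsNilpotent ((ρ g : Matrix (Fin d) (Fin d) (ZMod (ℓ ^ n))) - 1)) :
    (∀ g ∈ t.ker, ρ g = 1) ∧ IsOpen (ρ.ker : Set G) := by
  have hℓ : ℓ.Prime := Fact.out
  have : NeZero (ℓ ^ n) := ⟨pow_ne_zero n hℓ.ne_zero⟩
  set K := Nat.card (Matrix.GeneralLinearGroup (Fin d) (ZMod (ℓ ^ n)))
  have hℓn : (ℓ : Matrix (Fin d) (Fin d) (ZMod (ℓ ^ n))) ^ n = 0 := by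
    rw [← Nat.cast_pow, ← map_natCast (algebraMap (ZMod (ℓ ^ n)) _), ZMod.natCast_self,
      map_zero]
  have hρK (g : G) : ρ g ^ ℓ ^ K = 1 := pow_prime_pow_card_eq_one hℓ
    (Units.exists_pow_prime_pow_eq_one_of_isNilpotent_sub_one hℓ hℓn (hρ g))
  have : CompactSpace t.ker :=
    isCompact_iff_compactSpace.mp ((isClosed_singleton.preimage ht).isCompact)
  have hker : t.ker ≤ ρ.ker := fun g hg => by
    obtain ⟨h, hh⟩ := exists_pow_eq_of_coprime_index
      (fun U hU hUo => (hP U hU hUo).pow_right K) (⟨g, hg⟩ : t.ker)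
    rw [MonoidHom.mem_ker, ← show (h : G) ^ ℓ ^ K = g from congrArg Subtype.val hh, map_pow,
      hρK]
  exact ⟨hker, isOpen_ker_of_ker_le_of_pow_eq_one ht hts hker hρK⟩

/-- Let `ℓ` be a prime and `G` a profinite group with a continuous
surjective homomorphism `t : G → ℤ_ℓ` (to the additive group of `ℓ`-adic integers)
whose kernel is a pro-(prime-to-`ℓ`) profinite group. If `ρ : G → GL_d(ℤ/ℓ^nℤ)` is a
(not necessarily continuous) homomorphism with every `ρ g` unipotent, then `ρ` kills
the kernel of `t` and `ρ` is continuous, i.e. its kernel is an open subgroup of `G`. -/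
theorem stmt_4
    (ℓ : ℕ) [Fact ℓ.Prime]
    (G : Type*) [Group G] [TopologicalSpace G] [IsTopologicalGroup G]
    [CompactSpace G] [T2Space G] [TotallyDisconnectedSpace G]
    (t : G →* Multiplicative ℤ_[ℓ])
    (ht : Continuous t) (hts : Function.Surjective t)
    (hP : ∀ U : Subgroup t.ker, U.Normal → IsOpen (U : Set t.ker) → Nat.Coprime U.index ℓ)
    (d n : ℕ) (hd : 1 ≤ d) (hn : 1 ≤ n)
    (ρ : G →* Matrix.GeneralLinearGroup (Fin d) (ZMod (ℓ ^ n)))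
    (hρ : ∀ g : G,
      IsNilpotent ((ρ g : Matrix (Fin d) (Fin d) (ZMod (ℓ ^ n))) - 1)) :
    (∀ g ∈ t.ker, ρ g = 1) ∧ IsOpen (ρ.ker : Set G) :=
  stmt_4_general ℓ G t ht hts hP d n ρ hρ
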